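/- Fix N ∈ ℕ. Let h, u_m, u_1, …, u_N : ℝ × ℝ → ℝ be C¹ functions with h > 0, g > 0, b : ℝ → ℝ C¹, satisfying: (C) ∂ₜ h + ∂ₓ(h·u_m) = 0; (M) ∂ₜ(h·u_m) + ∂ₓ( h·u_m² + h·∑_{j=1}^N u_j²/(2j+1) + g·h²/2 ) = −g·h·∂ₓ b; and for each i, (u_i) ∂ₜ(h·u_i) + ∂ₓ(2·h·u_m·u_i) = u_m·∂ₓ(h·u_i). Then the total energy equation holds: ∂ₜ( h·u_m²/2 + (h/2)·∑_{i=1}^N u_i²/(2i+1) + g·h²/2 + g·h·b ) + ∂ₓ( h·u_m³/2 + (3·h·u_m/2)·∑_{i=1}^N u_i²/(2i+1) + g·h·u_m·(h+b) ) = 0. -/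

import Mathlib

/-- Partial derivative with respect to time (first coordinate). -/
noncomputable def pt (f : ℝ × ℝ → ℝ) (t x : ℝ) : ℝ := deriv (fun s => f (s, x)) t

/-- Partial derivative with respect to space (second coordinate). -/
noncomputable def px (f : ℝ × ℝ → ℝ) (t x : ℝ) : ℝ := deriv (fun y => f (t, y)) x

/-!
Multiplying the momentum equation by `u_m` and the continuity equation by `g (h + b) - u_m² / 2`
gives the energy equation of the classical shallow water system, except that the extra pressure
`P = h ∑ u_j² / (2j+1)` contributes the work term `-u_m ∂ₓ P`. Multiplying the `i`-th moment
equation by `u_i` and using continuity shows that the moment energy `h u_i² / 2` with flux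
`3 h u_m u_i² / 2` has source `u_m ∂ₓ (h u_i²)`; weighted by `1 / (2i+1)` and summed, these
sources are exactly the pressure work, so the total energy is conserved.
-/

section PartialDerivatives

variable {f : ℝ × ℝ → ℝ} {t x : ℝ}

theorem hasDerivAt_pt (hf : DifferentiableAt ℝ f (t, x)) :
    HasDerivAt (fun s => f (s, x)) (pt f t x) t :=
  (hf.comp t (differentiableAt_id.prodMk (differentiableAt_const x))).hasDerivAt

theorem hasDerivAt_px (hf : DifferentiableAt ℝ f (t, x)) :
    HasDerivAt (fun y => f (t, y)) (px f t x) x :=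
  (hf.comp x ((differentiableAt_const t).prodMk differentiableAt_id)).hasDerivAt

theorem pt_div_const (c : ℝ) : pt (fun p => f p / c) t x = pt f t x / c :=
  deriv_div_const c

theorem px_div_const (c : ℝ) : px (fun p => f p / c) t x = px f t x / c :=
  deriv_div_const c

theorem pt_sum {ι : Type*} (s : Finset ι) {F : ι → ℝ × ℝ → ℝ}
    (hF : ∀ i ∈ s, DifferentiableAt ℝ (F i) (t, x)) :
    pt (fun p => ∑ i ∈ s, F i p) t x = ∑ i ∈ s, pt (F i) t x :=
  (HasDerivAt.fun_sum fun i hi => hasDerivAt_pt (hF i hi)).deriv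

theorem px_sum {ι : Type*} (s : Finset ι) {F : ι → ℝ × ℝ → ℝ}
    (hF : ∀ i ∈ s, DifferentiableAt ℝ (F i) (t, x)) :
    px (fun p => ∑ i ∈ s, F i p) t x = ∑ i ∈ s, px (F i) t x :=
  (HasDerivAt.fun_sum fun i hi => hasDerivAt_px (hF i hi)).deriv

end PartialDerivatives

theorem moment_energy_balance {h um v : ℝ × ℝ → ℝ} {t x : ℝ}
    (hh : DifferentiableAt ℝ h (t, x)) (hum : DifferentiableAt ℝ um (t, x))
    (hv : DifferentiableAt ℝ v (t, x))
    (cont : pt h t x + px (fun p => h p * um p) t x = 0)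
    (moment : pt (fun p => h p * v p) t x + px (fun p => 2 * h p * um p * v p) t x
      = um (t, x) * px (fun p => h p * v p) t x) :
    pt (fun p => h p / 2 * v p ^ 2) t x + px (fun p => 3 * h p * um p / 2 * v p ^ 2) t x
      = um (t, x) * px (fun p => h p * v p ^ 2) t x := by
  have ht := hasDerivAt_pt hh
  have hx := hasDerivAt_px hh
  have umx := hasDerivAt_px hum
  have vt := hasDerivAt_pt hv
  have vx := hasDerivAt_px hv
  have mass_flux : px (fun p => h p * um p) t x = _ := (hx.fun_mul umx).deriv
  have moment_t : pt (fun p => h p * v p) t x = _ := (ht.fun_mul vt).deriv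
  have moment_flux : px (fun p => 2 * h p * um p * v p) t x = _ :=
    (((hx.const_mul 2).fun_mul umx).fun_mul vx).deriv
  have moment_x : px (fun p => h p * v p) t x = _ := (hx.fun_mul vx).deriv
  have energy_t : pt (fun p => h p / 2 * v p ^ 2) t x = _ :=
    ((ht.div_const 2).fun_mul (vt.fun_pow 2)).deriv
  have energy_flux : px (fun p => 3 * h p * um p / 2 * v p ^ 2) t x = _ :=
    ((((hx.const_mul 3).fun_mul umx).div_const 2).fun_mul (vx.fun_pow 2)).deriv
  have pressure_x : px (fun p => h p * v p ^ 2) t x = _ := (hx.fun_mul (vx.fun_pow 2)).deriv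
  rw [mass_flux] at cont
  rw [moment_t, moment_flux, moment_x] at moment
  rw [energy_t, energy_flux, pressure_x]
  linear_combination v (t, x) * moment - v (t, x) ^ 2 / 2 * cont

theorem sum_moment_energy_balance {ι : Type*} (s : Finset ι) (w : ι → ℝ) {h um : ℝ × ℝ → ℝ}
    {v : ι → ℝ × ℝ → ℝ} {t x : ℝ}
    (hh : DifferentiableAt ℝ h (t, x)) (hum : DifferentiableAt ℝ um (t, x))
    (hv : ∀ i ∈ s, DifferentiableAt ℝ (v i) (t, x))
    (cont : pt h t x + px (fun p => h p * um p) t x = 0)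
    (moment : ∀ i ∈ s, pt (fun p => h p * v i p) t x + px (fun p => 2 * h p * um p * v i p) t x
      = um (t, x) * px (fun p => h p * v i p) t x) :
    pt (fun p => h p / 2 * ∑ i ∈ s, v i p ^ 2 / w i) t x
        + px (fun p => 3 * h p * um p / 2 * ∑ i ∈ s, v i p ^ 2 / w i) t x
      = um (t, x) * px (fun p => h p * ∑ i ∈ s, v i p ^ 2 / w i) t x := by
  simp only [Finset.mul_sum, mul_div_assoc']
  rw [pt_sum _ fun i hi => by have := hv i hi; fun_prop,
    px_sum _ fun i hi => by have := hv i hi; fun_prop,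
    px_sum _ fun i hi => by have := hv i hi; fun_prop]
  simp only [pt_div_const, px_div_const]
  rw [Finset.mul_sum, ← Finset.sum_add_distrib]
  refine Finset.sum_congr rfl fun i hi => ?_
  rw [← add_div, moment_energy_balance hh hum (hv i hi) cont (moment i hi), mul_div_assoc]

theorem shallowWater_energy_equation {h um P K Φ : ℝ × ℝ → ℝ} {b : ℝ → ℝ} (g : ℝ) {t x : ℝ}
    (hh : DifferentiableAt ℝ h (t, x)) (hum : DifferentiableAt ℝ um (t, x))
    (hP : DifferentiableAt ℝ P (t, x)) (hK : DifferentiableAt ℝ K (t, x))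
    (hΦ : DifferentiableAt ℝ Φ (t, x)) (hb : DifferentiableAt ℝ b x)
    (cont : pt h t x + px (fun p => h p * um p) t x = 0)
    (mom : pt (fun p => h p * um p) t x
        + px (fun p => h p * um p ^ 2 + P p + g * h p ^ 2 / 2) t x
      = -(g * h (t, x) * deriv b x))
    (closure_balance : pt K t x + px Φ t x = um (t, x) * px P t x) :
    pt (fun p => h p * um p ^ 2 / 2 + K p + g * h p ^ 2 / 2 + g * h p * b p.2) t x
        + px (fun p => h p * um p ^ 3 / 2 + Φ p + g * h p * um p * (h p + b p.2)) t x = 0 := by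
  have ht := hasDerivAt_pt hh
  have hx := hasDerivAt_px hh
  have umt := hasDerivAt_pt hum
  have umx := hasDerivAt_px hum
  have mass_flux : px (fun p => h p * um p) t x = _ := (hx.fun_mul umx).deriv
  have momentum_t : pt (fun p => h p * um p) t x = _ := (ht.fun_mul umt).deriv
  have momentum_flux : px (fun p => h p * um p ^ 2 + P p + g * h p ^ 2 / 2) t x = _ :=
    (((hx.fun_mul (umx.fun_pow 2)).add (hasDerivAt_px hP)).add
      (((hx.fun_pow 2).const_mul g).div_const 2)).deriv
  have energy_t :
      pt (fun p => h p * um p ^ 2 / 2 + K p + g * h p ^ 2 / 2 + g * h p * b p.2) t x = _ :=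
    (((((ht.fun_mul (umt.fun_pow 2)).div_const 2).add (hasDerivAt_pt hK)).add
      (((ht.fun_pow 2).const_mul g).div_const 2)).add
      ((ht.const_mul g).fun_mul (hasDerivAt_const t (b x)))).deriv
  have energy_flux :
      px (fun p => h p * um p ^ 3 / 2 + Φ p + g * h p * um p * (h p + b p.2)) t x = _ :=
    ((((hx.fun_mul (umx.fun_pow 3)).div_const 2).add (hasDerivAt_px hΦ)).add
      (((hx.const_mul g).fun_mul umx).fun_mul (hx.fun_add hb.hasDerivAt))).deriv
  rw [mass_flux] at cont
  rw [momentum_t, momentum_flux] at mom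
  rw [energy_t, energy_flux]
  linear_combination um (t, x) * mom + (g * (h (t, x) + b x) - um (t, x) ^ 2 / 2) * cont
    + closure_balance

theorem swlme_total_energy_equation_general (N : ℕ)
    (h um : ℝ × ℝ → ℝ) (u : Fin N → ℝ × ℝ → ℝ) (b : ℝ → ℝ) (g : ℝ)
    (hh : ContDiff ℝ 1 h) (hum : ContDiff ℝ 1 um) (hu : ∀ i, ContDiff ℝ 1 (u i))
    (hb : ContDiff ℝ 1 b)
    (cont : ∀ t x : ℝ, pt h t x + px (fun p => h p * um p) t x = 0)
    (mom : ∀ t x : ℝ,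
      pt (fun p => h p * um p) t x
        + px (fun p => h p * (um p) ^ 2
            + h p * ∑ j : Fin N, (u j p) ^ 2 / (2 * ((j : ℕ) + 1) + 1)
            + g * (h p) ^ 2 / 2) t x
      = -(g * h (t, x) * deriv b x))
    (moment : ∀ i : Fin N, ∀ t x : ℝ,
      pt (fun p => h p * u i p) t x + px (fun p => 2 * h p * um p * u i p) t x
        = um (t, x) * px (fun p => h p * u i p) t x) :
    ∀ t x : ℝ,
      pt (fun p => h p * (um p) ^ 2 / 2
          + (h p / 2) * ∑ i : Fin N, (u i p) ^ 2 / (2 * ((i : ℕ) + 1) + 1)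
          + g * (h p) ^ 2 / 2 + g * h p * b p.2) t x
        + px (fun p => h p * (um p) ^ 3 / 2
          + (3 * h p * um p / 2) * ∑ i : Fin N, (u i p) ^ 2 / (2 * ((i : ℕ) + 1) + 1)
          + g * h p * um p * (h p + b p.2)) t x = 0 := by
  intro t x
  have dh := hh.differentiable one_ne_zero
  have dum := hum.differentiable one_ne_zero
  have du i := (hu i).differentiable one_ne_zero
  have db := hb.differentiable one_ne_zero
  exact shallowWater_energy_equation g (dh _) (dum _) (by fun_prop) (by fun_prop) (by fun_prop)
    (db x) (cont t x) (mom t x)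
    (sum_moment_energy_balance Finset.univ _ (dh _) (dum _) (fun i _ => du i _) (cont t x)
      fun i _ => moment i t x)

theorem swlme_total_energy_equation (N : ℕ)
    (h um : ℝ × ℝ → ℝ) (u : Fin N → ℝ × ℝ → ℝ) (b : ℝ → ℝ) (g : ℝ)
    (hh : ContDiff ℝ 1 h) (hum : ContDiff ℝ 1 um) (hu : ∀ i, ContDiff ℝ 1 (u i))
    (hb : ContDiff ℝ 1 b) (hpos : ∀ p, 0 < h p) (hg : 0 < g)
    (cont : ∀ t x : ℝ, pt h t x + px (fun p => h p * um p) t x = 0)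
    (mom : ∀ t x : ℝ,
      pt (fun p => h p * um p) t x
        + px (fun p => h p * (um p) ^ 2
            + h p * ∑ j : Fin N, (u j p) ^ 2 / (2 * ((j : ℕ) + 1) + 1)
            + g * (h p) ^ 2 / 2) t x
      = -(g * h (t, x) * deriv b x))
    (moment : ∀ i : Fin N, ∀ t x : ℝ,
      pt (fun p => h p * u i p) t x + px (fun p => 2 * h p * um p * u i p) t x
        = um (t, x) * px (fun p => h p * u i p) t x) :
    ∀ t x : ℝ,
      pt (fun p => h p * (um p) ^ 2 / 2
          + (h p / 2) * ∑ i : Fin N, (u i p) ^ 2 / (2 * ((i : ℕ) + 1) + 1)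
          + g * (h p) ^ 2 / 2 + g * h p * b p.2) t x
        + px (fun p => h p * (um p) ^ 3 / 2
          + (3 * h p * um p / 2) * ∑ i : Fin N, (u i p) ^ 2 / (2 * ((i : ℕ) + 1) + 1)
          + g * h p * um p * (h p + b p.2)) t x = 0 :=
  swlme_total_energy_equation_general N h um u b g hh hum hu hb cont mom moment
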